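/- arXiv:2601.06210 — 6 statements merged into one kernel-verified Lean document; each statement's English description precedes it below -/
import Mathlib

section
/- For a non-negative integer n and a complex number x ≠ 1, ∑_{k=1}^n ∑_{j=0}^{k-1} x^{n-j}/(k-j) = (1/(1-x)) (∑_{k=1}^n x^k/k − x^{n+1} H_n). -/
lemma last_term (n : ℕ) (x : ℂ) :
    ∑ j ∈ Finset.range (n + 1), x ^ (n + 1 - j) / ((n + 1 - j : ℕ) : ℂ) =
      ∑ k ∈ Finset.Icc 1 (n + 1), x ^ k / (k : ℂ) := by
  rw [← Finset.sum_range_reflect, ← Finset.Ico_add_one_right_eq_Icc, Finset.sum_Ico_eq_sum_range]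
  simp only [show n + 1 + 1 - 1 = n + 1 from rfl]
  apply Finset.sum_congr rfl
  intro j hj
  simp only [Finset.mem_range] at hj
  have h2 : n + 1 - 1 - j = n - j := by omega
  have h3 : n + 1 - (n - j) = 1 + j := by omega
  rw [h2, h3]

theorem double_sum_geometric (n : ℕ) (x : ℂ) (hx : x ≠ 1) :
    ∑ k ∈ Finset.Icc 1 n, ∑ j ∈ Finset.range k, x ^ (n - j) / ((k - j : ℕ) : ℂ) =
      (1 / (1 - x)) *
        ((∑ k ∈ Finset.Icc 1 n, x ^ k / (k : ℂ)) -
          x ^ (n + 1) * ∑ k ∈ Finset.Icc 1 n, (1 : ℂ) / (k : ℂ)) := by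
  have h1 : (1 : ℂ) - x ≠ 0 := by
    intro h; apply hx; linear_combination -h
  induction n with
  | zero => simp
  | succ n ih =>
    have hstep : ∀ k ∈ Finset.Icc 1 n,
        ∑ j ∈ Finset.range k, x ^ (n + 1 - j) / ((k - j : ℕ) : ℂ) =
          x * ∑ j ∈ Finset.range k, x ^ (n - j) / ((k - j : ℕ) : ℂ) := by
      intro k hk
      simp only [Finset.mem_Icc] at hk
      rw [Finset.mul_sum]
      apply Finset.sum_congr rfl
      intro j hj
      simp only [Finset.mem_range] at hj
      have : n + 1 - j = (n - j) + 1 := by omega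
      rw [this, pow_succ]
      ring
    rw [Finset.sum_Icc_succ_top (by omega : 1 ≤ n + 1),
        Finset.sum_congr rfl hstep, last_term, ← Finset.mul_sum, ih,
        Finset.sum_Icc_succ_top (by omega : 1 ≤ n + 1),
        Finset.sum_Icc_succ_top (by omega : 1 ≤ n + 1)]
    have hn : ((n : ℂ) + 1) ≠ 0 := by
      exact Nat.cast_add_one_ne_zero n
    push_cast
    field_simp
    ring
end

section
/- For a non-negative integer n, ∑_{k=1}^n ∑_{j=0}^{k-1} (-1)^j/(k-j) equals (1/2) H_{n/2} if n is even, and equals O_{(n+1)/2} = ∑_{k=1}^{(n+1)/2} 1/(2k-1) if n is odd. -/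
private noncomputable def AA (k : ℕ) : ℝ := ∑ j ∈ Finset.range k, (-1 : ℝ) ^ j / ((k - j : ℕ) : ℝ)

private lemma AA_succ (k : ℕ) : AA (k + 1) = 1 / (k + 1 : ℝ) - AA k := by
  unfold AA
  rw [Finset.sum_range_succ']
  have h : ∀ j ∈ Finset.range k,
      (-1 : ℝ) ^ (j + 1) / ((k + 1 - (j + 1) : ℕ) : ℝ) =
      -((-1 : ℝ) ^ j / ((k - j : ℕ) : ℝ)) := by
    intro j hj
    have : k + 1 - (j + 1) = k - j := by omega
    rw [this, pow_succ]
    ring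
  rw [Finset.sum_congr rfl h, Finset.sum_neg_distrib]
  simp
  ring

private noncomputable def FF (n : ℕ) : ℝ := ∑ k ∈ Finset.Icc 1 n, AA k

private lemma FF_step (n : ℕ) : FF (n + 2) = FF n + 1 / (n + 2 : ℝ) := by
  unfold FF
  rw [show n + 2 = (n + 1) + 1 from rfl,
    Finset.sum_Icc_succ_top (by omega), Finset.sum_Icc_succ_top (by omega),
    AA_succ (n + 1)]
  push_cast
  ring

private lemma even_case (m : ℕ) :
    FF (2 * m) = (1 / 2) * ∑ k ∈ Finset.Icc 1 m, (1 : ℝ) / (k : ℝ) := by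
  induction m with
  | zero => simp [FF]
  | succ m ih =>
      have h : 2 * (m + 1) = 2 * m + 2 := by ring
      rw [h, FF_step, ih, Finset.sum_Icc_succ_top (by omega)]
      push_cast
      field_simp

private lemma odd_case (m : ℕ) :
    FF (2 * m + 1) = ∑ k ∈ Finset.Icc 1 (m + 1), (1 : ℝ) / (2 * (k : ℝ) - 1) := by
  induction m with
  | zero =>
      simp [FF, AA]
      norm_num
  | succ m ih =>
      have h : 2 * (m + 1) + 1 = (2 * m + 1) + 2 := by ring
      rw [h, FF_step, ih]
      conv_rhs => rw [Finset.sum_Icc_succ_top (by omega : 1 ≤ m + 1 + 1)]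
      push_cast
      ring

theorem double_sum_alternating_over_gap (n : ℕ) :
    (Even n →
      ∑ k ∈ Finset.Icc 1 n, ∑ j ∈ Finset.range k, (-1 : ℝ) ^ j / ((k - j : ℕ) : ℝ) =
        (1 / 2) * ∑ k ∈ Finset.Icc 1 (n / 2), (1 : ℝ) / (k : ℝ)) ∧
    (Odd n →
      ∑ k ∈ Finset.Icc 1 n, ∑ j ∈ Finset.range k, (-1 : ℝ) ^ j / ((k - j : ℕ) : ℝ) =
        ∑ k ∈ Finset.Icc 1 ((n + 1) / 2), (1 : ℝ) / (2 * (k : ℝ) - 1)) := by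
  constructor
  · rintro ⟨m, rfl⟩
    have h1 : m + m = 2 * m := by ring
    have h2 : (m + m) / 2 = m := by omega
    rw [h2, show (∑ k ∈ Finset.Icc 1 (m + m), ∑ j ∈ Finset.range k,
      (-1 : ℝ) ^ j / ((k - j : ℕ) : ℝ)) = FF (m + m) from rfl, h1, even_case]
  · rintro ⟨m, rfl⟩
    have h2 : (2 * m + 1 + 1) / 2 = m + 1 := by omega
    rw [h2, show (∑ k ∈ Finset.Icc 1 (2 * m + 1), ∑ j ∈ Finset.range k,
      (-1 : ℝ) ^ j / ((k - j : ℕ) : ℝ)) = FF (2 * m + 1) from rfl, odd_case]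
end

section
/- For a non-negative integer n, ∑_{k=1}^n ∑_{j=0}^{k-1} 1/((k-j)(n+1-j)(n+2-j)) = n/(n+1) − H_n/(n+2). -/
open Finset

lemma swap_sum (n : ℕ) (f : ℕ → ℕ → ℝ) :
    ∑ k ∈ Icc 1 n, ∑ j ∈ range k, f k j
      = ∑ j ∈ range n, ∑ k ∈ Icc (j+1) n, f k j := by
  induction n with
  | zero => simp
  | succ n ih =>
      rw [Finset.sum_Icc_succ_top (by omega : 1 ≤ n + 1), ih, Finset.sum_range_succ,
        Finset.sum_range_succ]
      have h1 : ∀ j ∈ range n, ∑ k ∈ Icc (j+1) (n+1), f k j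
          = ∑ k ∈ Icc (j+1) n, f k j + f (n+1) j := by
        intro j hj
        exact Finset.sum_Icc_succ_top (by simp at hj; omega) _
      rw [Finset.sum_congr rfl h1, Finset.sum_add_distrib]
      have : Icc (n+1) (n+1) = {n+1} := Finset.Icc_self _
      rw [this, Finset.sum_singleton]
      ring

lemma harm_pos : True := trivial

noncomputable def H (n : ℕ) : ℝ := ∑ k ∈ Icc 1 n, (1 : ℝ) / (k : ℝ)

lemma lemA (n : ℕ) : ∑ i ∈ Icc 1 n, H i / (((i:ℝ)+1) * ((i:ℝ)+2))
    = (n : ℝ) / ((n:ℝ)+1) - H n / ((n:ℝ)+2) := by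
  induction n with
  | zero => simp [H]
  | succ n ih =>
      rw [Finset.sum_Icc_succ_top (by omega : 1 ≤ n + 1), ih]
      have hH : H (n+1) = H n + 1 / ((n:ℝ)+1) := by
        rw [H, H, Finset.sum_Icc_succ_top (by omega : 1 ≤ n + 1)]
        push_cast
        ring
      have h1 : ((n:ℝ)+1) ≠ 0 := by positivity
      have h2 : ((n:ℝ)+2) ≠ 0 := by positivity
      have h3 : ((n:ℝ)+3) ≠ 0 := by positivity
      rw [hH]
      push_cast
      field_simp
      ring

theorem double_sum_triple_product (n : ℕ) :
    ∑ k ∈ Finset.Icc 1 n, ∑ j ∈ Finset.range k,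
        (1 : ℝ) / (((k - j : ℕ) : ℝ) * (((n : ℝ) + 1 - j) * ((n : ℝ) + 2 - j))) =
      (n : ℝ) / ((n : ℝ) + 1) -
        (∑ k ∈ Finset.Icc 1 n, (1 : ℝ) / (k : ℝ)) / ((n : ℝ) + 2) := by
  rw [swap_sum]
  have step1 : ∀ j ∈ range n,
      ∑ k ∈ Icc (j+1) n, (1 : ℝ) / (((k - j : ℕ) : ℝ) * (((n : ℝ) + 1 - j) * ((n : ℝ) + 2 - j)))
        = H (n - j) / (((n : ℝ) + 1 - j) * ((n : ℝ) + 2 - j)) := by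
    intro j hj
    simp only [Finset.mem_range] at hj
    have hmap : Icc (j+1) n = Finset.map (addRightEmbedding j) (Icc 1 (n-j)) := by
      rw [Finset.map_add_right_Icc]
      congr 1 <;> omega
    rw [hmap, Finset.sum_map, H, Finset.sum_div]
    apply Finset.sum_congr rfl
    intro m hm
    simp only [addRightEmbedding_apply]
    have : m + j - j = m := by omega
    rw [this]
    rw [div_mul_eq_div_div]
  rw [Finset.sum_congr rfl step1]
  have step2 : ∑ j ∈ range n, H (n - j) / (((n : ℝ) + 1 - j) * ((n : ℝ) + 2 - j))
      = ∑ i ∈ Icc 1 n, H i / (((i:ℝ)+1) * ((i:ℝ)+2)) := by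
    refine Finset.sum_nbij' (fun j => n - j) (fun i => n - i) ?_ ?_ ?_ ?_ ?_ <;> first
      | (intro j hj
         simp only [Finset.mem_range, Finset.mem_Icc] at hj ⊢
         omega)
      | (intro j hj
         simp only [Finset.mem_range] at hj
         have h1 : ((n - j : ℕ) : ℝ) = (n : ℝ) - j := by
           push_cast [Nat.cast_sub (by omega : j ≤ n)]; ring
         rw [h1]; ring_nf)
  rw [step2, lemA, H]
end

section
/- For a non-negative integer n, ∑_{k=1}^n ∑_{j=0}^{k-1} 1/((k-j)(2(n-j)-1)(2(n-j)+1)) = O_n − ((n+1)/(2n+1)) H_n. -/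
noncomputable def F (n k j : ℕ) : ℝ :=
  (1 : ℝ) / (((k - j : ℕ) : ℝ) * ((2 * ((n - j : ℕ) : ℝ) - 1) * (2 * ((n - j : ℕ) : ℝ) + 1)))

noncomputable def L (n : ℕ) : ℝ := ∑ k ∈ Finset.Icc 1 n, ∑ j ∈ Finset.range k, F n k j

lemma L_range (m : ℕ) : L m = ∑ i ∈ Finset.range m, ∑ j ∈ Finset.range (1 + i), F m (1 + i) j := by
  rw [L, ← Finset.Ico_add_one_right_eq_Icc, Finset.sum_Ico_eq_sum_range]
  simp

lemma key (n : ℕ) :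
    L (n + 1) = L n + (∑ k ∈ Finset.Icc 1 (n + 1), (1:ℝ)/(k:ℝ)) *
      (1 / ((2*(n:ℝ)+1) * (2*(n:ℝ)+3))) := by
  rw [L_range, L_range]
  have h1 : ∀ i ∈ Finset.range (n+1),
      ∑ j ∈ Finset.range (1 + i), F (n+1) (1+i) j
        = (∑ j ∈ Finset.range i, F n i j) + F (n+1) (1+i) 0 := by
    intro i hi
    rw [add_comm 1 i, Finset.sum_range_succ']
    congr 1
    apply Finset.sum_congr rfl
    intro j hj
    simp only [Finset.mem_range] at hj hi
    unfold F
    have e1 : (i + 1) - (j + 1) = i - j := by omega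
    have e2 : (n + 1) - (j + 1) = n - j := by omega
    rw [e1, e2]
  rw [Finset.sum_congr rfl h1, Finset.sum_add_distrib]
  congr 1
  · rw [Finset.sum_range_succ' (fun i => ∑ j ∈ Finset.range i, F n i j)]
    simp [add_comm]
  · have h2 : ∀ i ∈ Finset.range (n+1),
        F (n+1) (1+i) 0 = ((1:ℝ)/((1+i:ℕ):ℝ)) * (1 / ((2*(n:ℝ)+1) * (2*(n:ℝ)+3))) := by
      intro i hi
      unfold F
      have : (n + 1) - 0 = n + 1 := rfl
      rw [Nat.sub_zero, Nat.sub_zero]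
      push_cast
      rw [one_div_mul_one_div]
      ring_nf
    rw [Finset.sum_congr rfl h2, ← Finset.sum_mul]
    congr 1
    rw [← Finset.Ico_add_one_right_eq_Icc, Finset.sum_Ico_eq_sum_range]
    simp

theorem double_sum_odd_triple_product (n : ℕ) :
    ∑ k ∈ Finset.Icc 1 n, ∑ j ∈ Finset.range k,
        (1 : ℝ) / (((k - j : ℕ) : ℝ) * ((2 * ((n - j : ℕ) : ℝ) - 1) * (2 * ((n - j : ℕ) : ℝ) + 1))) =
      (∑ k ∈ Finset.Icc 1 n, (1 : ℝ) / (2 * (k : ℝ) - 1)) -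
        (((n : ℝ) + 1) / (2 * (n : ℝ) + 1)) * ∑ k ∈ Finset.Icc 1 n, (1 : ℝ) / (k : ℝ) := by
  have main : ∀ m : ℕ, L m = (∑ k ∈ Finset.Icc 1 m, (1 : ℝ) / (2 * (k : ℝ) - 1)) -
      (((m : ℝ) + 1) / (2 * (m : ℝ) + 1)) * ∑ k ∈ Finset.Icc 1 m, (1 : ℝ) / (k : ℝ) := by
    intro m
    induction m with
    | zero => simp [L]
    | succ m ih =>
      rw [key, ih]
      rw [Finset.sum_Icc_succ_top (by omega : 1 ≤ m + 1),
          Finset.sum_Icc_succ_top (by omega : 1 ≤ m + 1)]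
      push_cast
      have hm1 : (m:ℝ) + 1 ≠ 0 := by positivity
      have h21 : 2*(m:ℝ) + 1 ≠ 0 := by positivity
      have h23 : 2*(m:ℝ) + 3 ≠ 0 := by positivity
      have h23' : 2*((m:ℝ)+1) - 1 ≠ 0 := by nlinarith [Nat.cast_nonneg (α := ℝ) m]
      have h23'' : 2*((m:ℝ)+1) + 1 ≠ 0 := by positivity
      field_simp
      ring
  exact main n
end

section
/- For a non-negative integer n, ∑_{k=1}^n ∑_{j=0}^{k-1} 1/((k-j)(n+1-j)) = (1/2)(H_n^2 − H_n^{(2)}) + H_n/(n+1), where H_n^{(2)} = ∑_{k=1}^n 1/k^2. -/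
open Finset

lemma reindex_dsp (n : ℕ) :
    ∑ k ∈ Finset.Icc 1 n, ∑ j ∈ Finset.range k,
        (1 : ℝ) / (((k - j : ℕ) : ℝ) * ((n : ℝ) + 1 - j)) =
    ∑ m ∈ Finset.Icc 1 n, ∑ i ∈ Finset.Icc 1 m,
        (1 : ℝ) / ((i : ℝ) * ((m : ℝ) + 1)) := by
  rw [Finset.sum_sigma', Finset.sum_sigma']
  refine Finset.sum_nbij' (fun p => ⟨n - p.2, p.1 - p.2⟩)
    (fun q => ⟨q.2 + (n - q.1), n - q.1⟩) ?_ ?_ ?_ ?_ ?_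
  · rintro ⟨k, j⟩ hp
    simp only [Finset.mem_sigma, Finset.mem_Icc, Finset.mem_range] at hp ⊢
    omega
  · rintro ⟨m, i⟩ hq
    simp only [Finset.mem_sigma, Finset.mem_Icc, Finset.mem_range] at hq ⊢
    omega
  · rintro ⟨k, j⟩ hp
    simp only [Finset.mem_sigma, Finset.mem_Icc, Finset.mem_range] at hp
    ext <;> simp <;> omega
  · rintro ⟨m, i⟩ hq
    simp only [Finset.mem_sigma, Finset.mem_Icc, Finset.mem_range] at hq
    ext <;> simp <;> omega
  · rintro ⟨k, j⟩ hp
    simp only [Finset.mem_sigma, Finset.mem_Icc, Finset.mem_range] at hp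
    have hj : j ≤ n := by omega
    have : ((n - j : ℕ) : ℝ) = (n : ℝ) - j := by
      push_cast [Nat.cast_sub hj]; ring
    simp only [this]
    ring_nf

lemma closed_dsp (n : ℕ) :
    ∑ m ∈ Finset.Icc 1 n, (∑ i ∈ Finset.Icc 1 m, (1 : ℝ) / (i : ℝ)) / ((m : ℝ) + 1) =
      (1 / 2) * ((∑ k ∈ Finset.Icc 1 n, (1 : ℝ) / (k : ℝ)) ^ 2 -
          ∑ k ∈ Finset.Icc 1 n, (1 : ℝ) / (k : ℝ) ^ 2) +
        (∑ k ∈ Finset.Icc 1 n, (1 : ℝ) / (k : ℝ)) / ((n : ℝ) + 1) := by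
  induction n with
  | zero => simp
  | succ n ih =>
    have h1 : (1 : ℕ) ≤ n + 1 := by omega
    rw [Finset.sum_Icc_succ_top h1, Finset.sum_Icc_succ_top h1, Finset.sum_Icc_succ_top h1, ih]
    have hn : ((n : ℝ) + 1) ≠ 0 := by positivity
    have hn2 : ((n : ℝ) + 1 + 1) ≠ 0 := by positivity
    push_cast
    field_simp
    ring

theorem double_sum_pair_product (n : ℕ) :
    ∑ k ∈ Finset.Icc 1 n, ∑ j ∈ Finset.range k,
        (1 : ℝ) / (((k - j : ℕ) : ℝ) * ((n : ℝ) + 1 - j)) =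
      (1 / 2) * ((∑ k ∈ Finset.Icc 1 n, (1 : ℝ) / (k : ℝ)) ^ 2 -
          ∑ k ∈ Finset.Icc 1 n, (1 : ℝ) / (k : ℝ) ^ 2) +
        (∑ k ∈ Finset.Icc 1 n, (1 : ℝ) / (k : ℝ)) / ((n : ℝ) + 1) := by
  rw [reindex_dsp, ← closed_dsp]
  refine Finset.sum_congr rfl fun m hm => ?_
  rw [Finset.sum_div]
  refine Finset.sum_congr rfl fun i hi => ?_
  rw [div_div]
end

section
/- For a non-negative integer n, ∑_{k=1}^n ∑_{j=0}^{k-1} H_{n-j}/(k-j) = (n+1)H_n^2 − (2n+1)H_n + 2n. -/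
open Finset

noncomputable def Hh (m : ℕ) : ℝ := ∑ i ∈ Icc 1 m, (1:ℝ)/(i:ℝ)

lemma Hh_succ (n : ℕ) : Hh (n+1) = Hh n + 1/((n:ℝ)+1) := by
  unfold Hh
  rw [Finset.sum_Icc_succ_top (by omega)]
  push_cast; ring

lemma sumsq (n : ℕ) : ∑ m ∈ Icc 1 n, (Hh m)^2
    = ((n:ℝ)+1) * (Hh n)^2 - (2*(n:ℝ)+1) * Hh n + 2*(n:ℝ) := by
  induction n with
  | zero => simp [Hh]
  | succ n ih =>
    rw [Finset.sum_Icc_succ_top (by omega), ih, Hh_succ]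
    have ha : ((n:ℝ)+1) ≠ 0 := by positivity
    push_cast
    field_simp
    ring

lemma innerSumH (n j : ℕ) (hj : j < n) :
    ∑ k ∈ Icc (j+1) n, (1:ℝ)/((k-j:ℕ):ℝ) = Hh (n-j) := by
  unfold Hh
  apply Finset.sum_nbij' (i := fun k => k - j) (j := fun m => m + j)
  all_goals intro a ha <;> simp_all <;> try omega

lemma swap (n : ℕ) :
    ∑ k ∈ Icc 1 n, ∑ j ∈ range k, Hh (n-j) / ((k-j:ℕ):ℝ)
    = ∑ m ∈ Icc 1 n, (Hh m)^2 := by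
  rw [Finset.sum_comm' (t' := range n) (s' := fun j => Icc (j+1) n)
    (by intro k j; simp; omega)]
  have h1 : ∀ j ∈ range n, ∑ k ∈ Icc (j+1) n, Hh (n-j) / ((k-j:ℕ):ℝ)
      = (Hh (n-j))^2 := by
    intro j hj
    simp only [mem_range] at hj
    rw [show ∀ (f : ℕ → ℝ), ∑ k ∈ Icc (j+1) n, Hh (n-j) / f k
        = Hh (n-j) * ∑ k ∈ Icc (j+1) n, 1 / f k by
      intro f; rw [Finset.mul_sum]; apply Finset.sum_congr rfl; intro k _; ring]
    rw [innerSumH n j hj]; ring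
  rw [Finset.sum_congr rfl h1]
  apply Finset.sum_nbij' (i := fun j => n - j) (j := fun m => n - m)
  all_goals intro a ha <;> simp_all <;> omega

theorem double_sum_harmonic_over_gap (n : ℕ) :
    ∑ k ∈ Finset.Icc 1 n, ∑ j ∈ Finset.range k,
        (∑ i ∈ Finset.Icc 1 (n - j), (1 : ℝ) / (i : ℝ)) / ((k - j : ℕ) : ℝ) =
      ((n : ℝ) + 1) * (∑ k ∈ Finset.Icc 1 n, (1 : ℝ) / (k : ℝ)) ^ 2 -
        (2 * (n : ℝ) + 1) * (∑ k ∈ Finset.Icc 1 n, (1 : ℝ) / (k : ℝ)) + 2 * (n : ℝ) := by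
  have := (swap n).trans (sumsq n)
  simpa [Hh] using this
end
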